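/- Let $h: I \to \mathscr{D}$ be a smooth curve and define $\tau(M)(t) = h(t) M(t)^* h(t)^{-1}$ for matrix-valued functions $M$ along $h$. Let $d_A M = \dot M - \frac{1}{2}[\dot h h^{-1}, M]$. Then $d_A(\tau(M)) = \tau(d_A M)$ for all $M$; i.e. the real structure $\tau$ is parallel with respect to the connection $d_A$. -/

import Mathlib

/-!
Differentiating `τ M = h M* h⁻¹` by the product rule, with `(h⁻¹)' = -h⁻¹ ḣ h⁻¹`, gives
`ḣ M* h⁻¹ + h Ṁ* h⁻¹ - h M* h⁻¹ ḣ h⁻¹`. Since `h` and `ḣ` are self-adjoint, `(ḣ h⁻¹)* = h⁻¹ ḣ`,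
so `τ [ḣ h⁻¹, M] = h M* h⁻¹ ḣ h⁻¹ - ḣ M* h⁻¹ = -[ḣ h⁻¹, τ M]`: subtracting half of this
commutator on either side leaves `½ ḣ M* h⁻¹ + h Ṁ* h⁻¹ - ½ h M* h⁻¹ ḣ h⁻¹` in both cases.
-/

open Matrix

attribute [local instance] Matrix.frobeniusNormedAddCommGroup Matrix.frobeniusNormedRing
  Matrix.frobeniusNormedSpace Matrix.frobeniusNormedAlgebra

theorem HasDerivAt.ringInverse {𝕜 R : Type*} [NontriviallyNormedField 𝕜] [NormedRing R]
    [HasSummableGeomSeries R] [NormedAlgebra 𝕜 R] {f : 𝕜 → R} {f' : R} {x : 𝕜}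
    (hf : HasDerivAt f f' x) (hx : IsUnit (f x)) :
    HasDerivAt (fun s => Ring.inverse (f s))
      (-(Ring.inverse (f x) * f' * Ring.inverse (f x))) x := by
  obtain ⟨u, hu⟩ := hx
  rw [← hu, Ring.inverse_unit]
  exact (hu ▸ hasFDerivAt_ringInverse (𝕜 := 𝕜) u).comp_hasDerivAt x hf

theorem isSelfAdjoint_deriv {𝕜 F : Type*} [NontriviallyNormedField 𝕜] [StarRing 𝕜]
    [TrivialStar 𝕜] [NormedAddCommGroup F] [NormedSpace 𝕜 F] [StarAddMonoid F]
    [ContinuousStar F] [StarModule 𝕜 F] {f : 𝕜 → F} (hf : ∀ s, IsSelfAdjoint (f s)) (x : 𝕜) :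
    IsSelfAdjoint (deriv f x) := by
  have hstar : (fun s => star (f s)) = f := funext hf
  rw [IsSelfAdjoint, ← deriv.star, hstar]

section RealStructure

variable {A : Type*} [NormedRing A] [NormedAlgebra ℝ A] [HasSummableGeomSeries A] [StarRing A]
  [ContinuousStar A] [StarModule ℝ A] [Algebra ℂ A] [StarModule ℂ A]

noncomputable def realStructure (h M : ℝ → A) : ℝ → A :=
  fun t => h t * star (M t) * Ring.inverse (h t)

noncomputable def covDeriv (h M : ℝ → A) : ℝ → A :=
  fun t => deriv M t - (2 : ℂ)⁻¹ • ⁅deriv h t * Ring.inverse (h t), M t⁆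

theorem covDeriv_realStructure {h M : ℝ → A} {t : ℝ} (hself : ∀ s, IsSelfAdjoint (h s))
    (hunit : IsUnit (h t)) (hdh : DifferentiableAt ℝ h t) (hdM : DifferentiableAt ℝ M t) :
    covDeriv h (realStructure h M) t = realStructure h (covDeriv h M) t := by
  have hderiv : HasDerivAt (realStructure h M)
      ((deriv h t * star (M t) + h t * star (deriv M t)) * Ring.inverse (h t)
        + h t * star (M t) * -(Ring.inverse (h t) * deriv h t * Ring.inverse (h t))) t :=
    (hdh.hasDerivAt.mul hdM.hasDerivAt.star).mul (hdh.hasDerivAt.ringInverse hunit)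
  unfold covDeriv
  rw [hderiv.deriv]
  unfold realStructure
  beta_reduce
  have hdh_self := (isSelfAdjoint_deriv hself t).star_eq
  have hinv_self := (hself t).ringInverse.star_eq
  have hhalf : star (2 : ℂ)⁻¹ = 2⁻¹ := by simp
  obtain ⟨u, hu⟩ := hunit
  rw [← hu, Ring.inverse_unit] at hinv_self ⊢
  simp only [Ring.lie_def, star_sub, star_smul, star_mul, hinv_self, hdh_self, hhalf, mul_assoc,
    Units.inv_mul_cancel_left, Units.mul_inv_cancel_left, mul_sub, sub_mul, mul_smul_comm,
    smul_mul_assoc, add_mul, mul_neg, smul_sub]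
  module

end RealStructure

theorem stmt_5_general (h M : ℝ → Matrix (Fin 2) (Fin 2) ℂ) (t : ℝ)
    (hherm : ∀ s, (h s)ᴴ = h s)
    (hinv : ∀ s, IsUnit (h s))
    (hdh : Differentiable ℝ h) (hdM : Differentiable ℝ M) :
    deriv (fun s => h s * (M s)ᴴ * (h s)⁻¹) t
        - (2 : ℂ)⁻¹ • ⁅deriv h t * (h t)⁻¹, h t * (M t)ᴴ * (h t)⁻¹⁆
      = h t * (deriv M t - (2 : ℂ)⁻¹ • ⁅deriv h t * (h t)⁻¹, M t⁆)ᴴ * (h t)⁻¹ := by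
  have hparallel := covDeriv_realStructure (M := M) hherm (hinv t) (hdh t) (hdM t)
  unfold covDeriv realStructure at hparallel
  simp only [star_eq_conjTranspose, ← nonsing_inv_eq_ringInverse] at hparallel
  exact hparallel

/-- Along a smooth curve `h` in the matrix model of `ℍ³`, the real structure
`τ(M) = h Mᴴ h⁻¹` is parallel for the connection `d_A M = Ṁ - ½ [ḣ h⁻¹, M]`:
`d_A (τ M) = τ (d_A M)`. -/
theorem stmt_5 (h M : ℝ → Matrix (Fin 2) (Fin 2) ℂ) (t : ℝ)
    (hherm : ∀ s, (h s)ᴴ = h s) (htr : ∀ s, (M s).trace = 0)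
    (hinv : ∀ s, IsUnit (h s))
    (hdh : Differentiable ℝ h) (hdM : Differentiable ℝ M)
    (hdinv : Differentiable ℝ fun s => (h s)⁻¹) :
    deriv (fun s => h s * (M s)ᴴ * (h s)⁻¹) t
        - (2 : ℂ)⁻¹ • ⁅deriv h t * (h t)⁻¹, h t * (M t)ᴴ * (h t)⁻¹⁆
      = h t * (deriv M t - (2 : ℂ)⁻¹ • ⁅deriv h t * (h t)⁻¹, M t⁆)ᴴ * (h t)⁻¹ :=
  stmt_5_general h M t hherm hinv hdh hdM
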